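/- For κ = 7, with ⟨x⟩ = sin(πx/7)/sin(π/7) for real x, define for nonnegative integers λ1, λ2 the quantity qdimG2(λ1,λ2) = ⟨λ1+1⟩·⟨λ2/3+1/3⟩·⟨λ1+λ2/3+4/3⟩·⟨λ1+2λ2/3+5/3⟩·⟨λ1+λ2+2⟩·⟨2λ1+λ2+3⟩ / (⟨1/3⟩·⟨1⟩·⟨4/3⟩·⟨5/3⟩·⟨2⟩·⟨3⟩). Then qdimG2(0,1) = (3+√21)/2, qdimG2(0,2) = (7+√21)/2, qdimG2(1,0) = (3+√21)/2, and qdimG2(1,1) = (5+√21)/2. -/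

import Mathlib

/-- The q-number at altitude `κ`: `⟨x⟩ = sin(πx/κ)/sin(π/κ)`. -/
noncomputable def qnum (κ x : ℝ) : ℝ := Real.sin (Real.pi * x / κ) / Real.sin (Real.pi / κ)

/-- The quantum Weyl dimension of the irreducible G2 representation of highest weight
`{λ1,λ2}` at altitude κ = 7 (level k = 3). -/
noncomputable def qdimG2 (lam1 lam2 : ℕ) : ℝ :=
    qnum 7 (lam1 + 1) * qnum 7 (lam2 / 3 + 1/3) * qnum 7 (lam1 + lam2 / 3 + 4/3) *
      qnum 7 (lam1 + 2 * lam2 / 3 + 5/3) * qnum 7 (lam1 + lam2 + 2) *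
      qnum 7 (2 * lam1 + lam2 + 3) /
    (qnum 7 (1/3) * qnum 7 1 * qnum 7 (4/3) * qnum 7 (5/3) * qnum 7 2 * qnum 7 3)

/-!
Write `θ = π/21`, so that `⟨x⟩ = sin (3xθ) / sin (3θ)`. By the Weyl character formula each
quantum dimension is the value at `e^{iθ}` of a character of `G₂`, a polynomial in the orbit sums
`P = Σ 2 cos (kθ)` over the short roots, `Q` over twice the short roots and `R` over the long
roots; these are trigonometric identities in `θ`, i.e. Laurent polynomial identities in `e^{iθ}`.
At `θ = π/21`, the vanishing sums of 7th and 21st roots of unity give `R = -1` and `P + Q = 1`,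
so the Gauss period `P` satisfies `P² = P + 5`; being positive, `P = (1 + √21)/2`.
-/

namespace Complex

lemma exp_nat_mul_mul_I (x : ℂ) (n : ℕ) : exp (n * x * I) = exp (x * I) ^ n := by
  rw [mul_assoc, exp_nat_mul]

lemma sin_nat_mul_eq (x : ℂ) (n : ℕ) :
    sin (n * x) = (exp (x * I) ^ n - (exp (x * I) ^ n)⁻¹) / (2 * I) := by
  rw [sin, neg_mul, exp_neg, exp_nat_mul_mul_I]
  field_simp
  ring_nf
  simp [I_sq]

lemma cos_nat_mul_eq (x : ℂ) (n : ℕ) :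
    cos (n * x) = (exp (x * I) ^ n + (exp (x * I) ^ n)⁻¹) / 2 := by
  rw [cos, neg_mul, exp_neg, exp_nat_mul_mul_I]

lemma sin_eq_exp_mul_I (x : ℂ) : sin x = (exp (x * I) - (exp (x * I))⁻¹) / (2 * I) := by
  simpa using sin_nat_mul_eq x 1

lemma sin_ofNat_mul_eq (n : ℕ) [n.AtLeastTwo] (x : ℂ) :
    sin (ofNat(n) * x) =
      (exp (x * I) ^ (ofNat(n) : ℕ) - (exp (x * I) ^ (ofNat(n) : ℕ))⁻¹) / (2 * I) := by
  rw [← sin_nat_mul_eq, Nat.cast_ofNat]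

lemma cos_ofNat_mul_eq (n : ℕ) [n.AtLeastTwo] (x : ℂ) :
    cos (ofNat(n) * x) =
      (exp (x * I) ^ (ofNat(n) : ℕ) + (exp (x * I) ^ (ofNat(n) : ℕ))⁻¹) / 2 := by
  rw [← cos_nat_mul_eq, Nat.cast_ofNat]

end Complex

open Real

/- The multipliers `k` are `6 (ρ, α)` for the positive roots `α` of each orbit, normalized so
that long roots have squared length 2. -/
noncomputable def shortRootSum (θ : ℝ) : ℝ :=
  2 * cos (2 * θ) + 2 * cos (8 * θ) + 2 * cos (10 * θ)

noncomputable def longRootSum (θ : ℝ) : ℝ :=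
  2 * cos (6 * θ) + 2 * cos (12 * θ) + 2 * cos (18 * θ)

noncomputable def twiceShortRootSum (θ : ℝ) : ℝ :=
  2 * cos (4 * θ) + 2 * cos (16 * θ) + 2 * cos (20 * θ)

section TrigIdentities

variable (θ : ℝ)

lemma weyl_character_dim7 : sin (2 * θ) * sin (7 * θ) * sin (12 * θ) =
    sin θ * sin (4 * θ) * sin (6 * θ) * (1 + shortRootSum θ) := by
  simp only [shortRootSum]
  apply Complex.ofReal_injective
  push_cast
  simp only [Complex.sin_ofNat_mul_eq, Complex.cos_ofNat_mul_eq]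
  rw [Complex.sin_eq_exp_mul_I]
  field_simp
  ring

lemma weyl_character_dim14 : sin (7 * θ) * sin (8 * θ) * sin (15 * θ) =
    sin (3 * θ) * sin (4 * θ) * sin (5 * θ) * (2 + shortRootSum θ + longRootSum θ) := by
  simp only [shortRootSum, longRootSum]
  apply Complex.ofReal_injective
  push_cast
  simp only [Complex.sin_ofNat_mul_eq, Complex.cos_ofNat_mul_eq]
  field_simp
  ring

lemma weyl_character_dim27 : sin (3 * θ) * sin (12 * θ) * sin (15 * θ) =
    sin θ * sin (4 * θ) * sin (5 * θ) *
      (3 + 2 * shortRootSum θ + twiceShortRootSum θ + longRootSum θ) := by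
  simp only [shortRootSum, longRootSum, twiceShortRootSum]
  apply Complex.ofReal_injective
  push_cast
  simp only [Complex.sin_ofNat_mul_eq, Complex.cos_ofNat_mul_eq]
  rw [Complex.sin_eq_exp_mul_I]
  field_simp
  ring

lemma weyl_character_dim64 :
    sin (2 * θ) * sin (8 * θ) * sin (10 * θ) * sin (12 * θ) * sin (18 * θ) =
      sin θ * sin (3 * θ) * sin (4 * θ) * sin (5 * θ) * sin (9 * θ) *
        ((2 + shortRootSum θ) * (2 + longRootSum θ)) := by
  simp only [shortRootSum, longRootSum]
  apply Complex.ofReal_injective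
  push_cast
  simp only [Complex.sin_ofNat_mul_eq, Complex.cos_ofNat_mul_eq]
  rw [Complex.sin_eq_exp_mul_I]
  field_simp
  ring

lemma shortRootSum_sq : shortRootSum θ ^ 2 =
    6 + 2 * shortRootSum θ + twiceShortRootSum θ + 2 * longRootSum θ := by
  simp only [shortRootSum, longRootSum, twiceShortRootSum]
  apply Complex.ofReal_injective
  push_cast
  simp only [Complex.cos_ofNat_mul_eq]
  field_simp
  ring

lemma sin_mul_one_add_longRootSum : sin (3 * θ) * (1 + longRootSum θ) = sin (21 * θ) := by
  simp only [longRootSum]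
  apply Complex.ofReal_injective
  push_cast
  simp only [Complex.sin_ofNat_mul_eq, Complex.cos_ofNat_mul_eq]
  field_simp
  ring

lemma sin_mul_one_add_rootSums : sin θ * (1 + shortRootSum θ + twiceShortRootSum θ +
    longRootSum θ + 2 * cos (14 * θ)) = sin (21 * θ) := by
  simp only [shortRootSum, longRootSum, twiceShortRootSum]
  apply Complex.ofReal_injective
  push_cast
  simp only [Complex.sin_ofNat_mul_eq, Complex.cos_ofNat_mul_eq]
  rw [Complex.sin_eq_exp_mul_I]
  field_simp
  ring

end TrigIdentities

lemma sin_mul_pi_div_pos {k n : ℝ} (hk : 0 < k) (hkn : k < n) : 0 < sin (k * (π / n)) := by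
  have hn : 0 < n := hk.trans hkn
  apply sin_pos_of_pos_of_lt_pi (by positivity)
  calc k * (π / n) < n * (π / n) := by gcongr
    _ = π := by field_simp

lemma sin_mul_pi_div_ne_zero {k n : ℝ} (hk : 0 < k) (hkn : k < n) : sin (k * (π / n)) ≠ 0 :=
  (sin_mul_pi_div_pos hk hkn).ne'

lemma sin_pi_div_twenty_one_ne_zero : sin (π / 21) ≠ 0 := by
  simpa using sin_mul_pi_div_ne_zero (n := 21) one_pos (by norm_num)

lemma sin_twenty_one_mul_pi_div_twenty_one : sin (21 * (π / 21)) = 0 := by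
  rw [show 21 * (π / 21) = π by ring, sin_pi]

lemma longRootSum_pi_div_twenty_one : longRootSum (π / 21) = -1 := by
  have h := sin_mul_one_add_longRootSum (π / 21)
  rw [sin_twenty_one_mul_pi_div_twenty_one, mul_eq_zero] at h
  linarith [h.resolve_left (sin_mul_pi_div_ne_zero (by norm_num) (by norm_num))]

lemma twiceShortRootSum_pi_div_twenty_one :
    twiceShortRootSum (π / 21) = 1 - shortRootSum (π / 21) := by
  have h := sin_mul_one_add_rootSums (π / 21)
  rw [sin_twenty_one_mul_pi_div_twenty_one, mul_eq_zero, longRootSum_pi_div_twenty_one,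
    show 14 * (π / 21) = π - π / 3 by ring, cos_pi_sub, cos_pi_div_three] at h
  linarith [h.resolve_left sin_pi_div_twenty_one_ne_zero]

lemma eq_of_sq_eq_add_five {x : ℝ} (hx : 0 < x) (h : x ^ 2 = x + 5) : x = (1 + √21) / 2 := by
  have hroot : √21 = 2 * x - 1 := by
    rw [sqrt_eq_iff_mul_self_eq_of_pos (by nlinarith)]
    linear_combination 4 * h
  linarith

lemma shortRootSum_pi_div_twenty_one : shortRootSum (π / 21) = (1 + √21) / 2 := by
  apply eq_of_sq_eq_add_five
  · have hcos (k : ℝ) (hk : 0 < k) (hk' : k < 21 / 2) : 0 < cos (k * (π / 21)) := by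
      apply cos_pos_of_mem_Ioo
      constructor <;> nlinarith [pi_pos]
    simp only [shortRootSum]
    linarith [hcos 2 (by norm_num) (by norm_num), hcos 8 (by norm_num) (by norm_num),
      hcos 10 (by norm_num) (by norm_num)]
  · rw [shortRootSum_sq, twiceShortRootSum_pi_div_twenty_one, longRootSum_pi_div_twenty_one]
    ring

lemma qnum_seven (x : ℝ) : qnum 7 x = sin (3 * x * (π / 21)) / sin (3 * (π / 21)) := by
  rw [qnum]; ring_nf

lemma qdimG2_eq_sin_div (a b : ℕ) : qdimG2 a b =
    sin (3 * (a + 1) * (π / 21)) * sin (3 * (b / 3 + 1 / 3) * (π / 21)) *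
      sin (3 * (a + b / 3 + 4 / 3) * (π / 21)) * sin (3 * (a + 2 * b / 3 + 5 / 3) * (π / 21)) *
      sin (3 * (a + b + 2) * (π / 21)) * sin (3 * (2 * a + b + 3) * (π / 21)) /
    (sin (π / 21) * sin (3 * (π / 21)) * sin (4 * (π / 21)) * sin (5 * (π / 21)) *
      sin (6 * (π / 21)) * sin (9 * (π / 21))) := by
  have h3 := sin_mul_pi_div_ne_zero (n := 21) (k := 3) (by norm_num) (by norm_num)
  simp only [qdimG2, qnum_seven, div_mul_div_comm]
  rw [div_div_div_cancel_right₀ (by simp [h3])]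
  norm_num

lemma sin_denominator_ne_zero : sin (π / 21) * sin (3 * (π / 21)) * sin (4 * (π / 21)) *
    sin (5 * (π / 21)) * sin (6 * (π / 21)) * sin (9 * (π / 21)) ≠ 0 := by
  simp only [mul_ne_zero_iff]
  refine ⟨⟨⟨⟨⟨sin_pi_div_twenty_one_ne_zero, ?_⟩, ?_⟩, ?_⟩, ?_⟩, ?_⟩ <;>
    exact sin_mul_pi_div_ne_zero (by norm_num) (by norm_num)

lemma qdimG2_zero_one : qdimG2 0 1 = 1 + shortRootSum (π / 21) := by
  rw [qdimG2_eq_sin_div, div_eq_iff sin_denominator_ne_zero]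
  norm_num
  linear_combination sin (3 * (π / 21)) * sin (5 * (π / 21)) * sin (9 * (π / 21)) *
    weyl_character_dim7 (π / 21)

lemma qdimG2_one_zero : qdimG2 1 0 = 2 + shortRootSum (π / 21) + longRootSum (π / 21) := by
  rw [qdimG2_eq_sin_div, div_eq_iff sin_denominator_ne_zero]
  norm_num
  linear_combination sin (π / 21) * sin (6 * (π / 21)) * sin (9 * (π / 21)) *
    weyl_character_dim14 (π / 21)

lemma qdimG2_zero_two : qdimG2 0 2 =
    3 + 2 * shortRootSum (π / 21) + twiceShortRootSum (π / 21) + longRootSum (π / 21) := by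
  rw [qdimG2_eq_sin_div, div_eq_iff sin_denominator_ne_zero]
  norm_num
  linear_combination sin (3 * (π / 21)) * sin (6 * (π / 21)) * sin (9 * (π / 21)) *
    weyl_character_dim27 (π / 21)

lemma qdimG2_one_one : qdimG2 1 1 = (2 + shortRootSum (π / 21)) * (2 + longRootSum (π / 21)) := by
  rw [qdimG2_eq_sin_div, div_eq_iff sin_denominator_ne_zero]
  norm_num
  linear_combination sin (6 * (π / 21)) * weyl_character_dim64 (π / 21)

/-- Quantum dimensions of the simple objects `{0,1}`, `{0,2}`, `{1,0}`, `{1,1}` of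
`A₃(G₂)`. -/
theorem g2_level3_qdims :
    qdimG2 0 1 = (3 + Real.sqrt 21) / 2 ∧
    qdimG2 0 2 = (7 + Real.sqrt 21) / 2 ∧
    qdimG2 1 0 = (3 + Real.sqrt 21) / 2 ∧
    qdimG2 1 1 = (5 + Real.sqrt 21) / 2 := by
  rw [qdimG2_zero_one, qdimG2_zero_two, qdimG2_one_zero, qdimG2_one_one,
    twiceShortRootSum_pi_div_twenty_one, longRootSum_pi_div_twenty_one,
    shortRootSum_pi_div_twenty_one]
  refine ⟨?_, ?_, ?_, ?_⟩ <;> ring
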